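/- arXiv:math/0209155 — 2 statements merged into one kernel-verified Lean document; each statement's English description precedes it below -/
import Mathlib

section
/- Let G be the direct limit of the system ℤ² → ℤ² → ⋯ where each map is given by the matrix M = [[1,1],[1,0]]. Then G is isomorphic as an abelian group to the subgroup ℤ + ℤ·((√5-1)/2) of ℝ. -/
/-- The transition maps of the golden-mean system: multiplication by the
matrix `M = [[1,1],[1,0]]` repeated `j - i` times. -/
def goldenMap (i j : ℕ) (_ : i ≤ j) : (Fin 2 → ℤ) →+ (Fin 2 → ℤ) :=
  (Matrix.mulVecLin ((!![1, 1; 1, 0] : Matrix (Fin 2) (Fin 2) ℤ) ^ (j - i))).toAddMonoidHom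

/-!
The matrix `M = [[1,1],[1,0]]` has determinant `-1`, so it is invertible over `ℤ` and every
transition map is an automorphism of `ℤ²`; hence the canonical map from the first copy of `ℤ²`
into the direct limit is already an isomorphism. On the other side, `(√5 - 1) / 2` is irrational,
so `1` and `(√5 - 1) / 2` are `ℤ`-linearly independent and `(m, n) ↦ m + n (√5 - 1) / 2`
identifies `ℤ²` with the subgroup they generate.
-/

namespace AddCommGroup.DirectLimit

variable {ι : Type*} [Preorder ι] [DecidableEq ι] [IsDirectedOrder ι] {G : ι → Type*}
  [∀ i, AddCommGroup (G i)] {f : ∀ i j, i ≤ j → G i →+ G j}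
  [DirectedSystem G fun i j h ↦ f i j h]

theorem of_bijective (hf : ∀ i j h, Function.Bijective (f i j h)) (i : ι) :
    Function.Bijective (of G f i) := by
  have : Nonempty ι := ⟨i⟩
  refine ⟨(injective_iff_map_eq_zero _).2 fun x hx ↦ ?_, fun z ↦ ?_⟩
  · obtain ⟨j, hij, hx⟩ := of.zero_exact i x hx
    exact (hf i j hij).injective (hx.trans (map_zero _).symm)
  · induction z using DirectLimit.induction_on with
    | ih j y =>
      obtain ⟨k, hik, hjk⟩ := directed_of (· ≤ ·) i j
      obtain ⟨x, hx⟩ := (hf i k hik).surjective (f j k hjk y)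
      exact ⟨x, by rw [← of_f hik, hx, of_f]⟩

end AddCommGroup.DirectLimit

theorem Matrix.directedSystem_mulVec_pow {n R : Type*} [Fintype n] [DecidableEq n] [Semiring R]
    (A : Matrix n n R) :
    DirectedSystem (fun _ : ℕ ↦ n → R) fun i j _ ↦ (A ^ (j - i)).mulVec where
  map_self i v := by simp
  map_map {k j i} hij hjk v := by
    rw [mulVec_mulVec, ← pow_add]
    congr 2
    omega

instance : DirectedSystem (fun _ : ℕ ↦ Fin 2 → ℤ) fun i j h ↦ goldenMap i j h :=
  Matrix.directedSystem_mulVec_pow _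

theorem goldenMap_bijective (i j : ℕ) (h : i ≤ j) : Function.Bijective (goldenMap i j h) := by
  have hM : IsUnit (!![1, 1; 1, 0] : Matrix (Fin 2) (Fin 2) ℤ) := by
    rw [Matrix.isUnit_iff_isUnit_det, Matrix.det_fin_two_of]
    exact Int.isUnit_iff.2 (by norm_num)
  exact ⟨Matrix.mulVec_injective_of_isUnit (hM.pow _),
    Matrix.mulVec_surjective_iff_isUnit.2 (hM.pow _)⟩

section IntPair

variable {A : Type*} [AddCommGroup A]

def intPairHom (a b : A) : (Fin 2 → ℤ) →+ A where
  toFun v := v 0 • a + v 1 • b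
  map_zero' := by simp
  map_add' v w := by simp only [Pi.add_apply, add_zsmul]; abel

theorem range_intPairHom (a b : A) : (intPairHom a b).range = AddSubgroup.closure {a, b} := by
  ext x
  rw [AddMonoidHom.mem_range, AddSubgroup.mem_closure_pair]
  exact ⟨fun ⟨v, hv⟩ ↦ ⟨v 0, v 1, hv⟩, fun ⟨m, n, h⟩ ↦ ⟨![m, n], h⟩⟩

theorem intPairHom_one_injective {a : ℝ} (ha : Irrational a) :
    Function.Injective (intPairHom 1 a) := by
  refine (injective_iff_map_eq_zero _).2 fun v hv ↦ ?_
  change v 0 • (1 : ℝ) + v 1 • a = 0 at hv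
  rw [zsmul_eq_mul, zsmul_eq_mul, mul_one] at hv
  have h1 : v 1 = 0 := by
    by_contra h1
    exact ((ha.intCast_mul h1).intCast_add (v 0)).ne_zero hv
  have h0 : v 0 = 0 := by simpa [h1] using hv
  ext i
  fin_cases i <;> assumption

end IntPair

theorem AddSubgroup.coe_closure_one_pair {R : Type*} [Ring R] (a : R) :
    (closure ({1, a} : Set R) : Set R) = {x | ∃ m n : ℤ, x = m + n * a} := by
  ext x
  simp only [SetLike.mem_coe, mem_closure_pair, zsmul_eq_mul, mul_one, Set.mem_ofPred_eq, eq_comm]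

theorem irrational_sqrt_five_sub_one_div_two : Irrational ((Real.sqrt 5 - 1) / 2) := by
  convert Real.goldenConj_irrational.neg using 1
  ring

theorem golden_direct_limit_iso :
    Nonempty
      (AddCommGroup.DirectLimit (fun _ : ℕ => Fin 2 → ℤ) goldenMap ≃+
        AddSubgroup.closure ({1, (Real.sqrt 5 - 1) / 2} : Set ℝ)) ∧
    (AddSubgroup.closure ({1, (Real.sqrt 5 - 1) / 2} : Set ℝ) : Set ℝ) =
      {x : ℝ | ∃ m n : ℤ, x = (m : ℝ) + (n : ℝ) * ((Real.sqrt 5 - 1) / 2)} := by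
  refine ⟨⟨?_⟩, AddSubgroup.coe_closure_one_pair _⟩
  let limitEquiv := AddEquiv.ofBijective _
    (AddCommGroup.DirectLimit.of_bijective goldenMap_bijective 0)
  let pairEquiv := AddMonoidHom.ofInjective
    (intPairHom_one_injective irrational_sqrt_five_sub_one_div_two)
  exact limitEquiv.symm.trans (pairEquiv.trans (.addSubgroupCongr (range_intPairHom _ _)))
end

section
/- The Fibonacci word, defined as the fixed point of the substitution a ↦ ab, b ↦ a, is not eventually periodic. -/
/-!
Let `A n` be the number of `a`s among the first `n` letters of the Fibonacci word. Since `σ` maps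
every letter to a word containing exactly one `a`, and `σ` of the first `n` letters is the prefix of
length `n + A n`, we get `A (n + A n) = n`. If the word had period `p` from `N` on, with `c` letters
`a` per period, then `A (m + k p) = A m + k c` for `m ≥ N`; comparing `A (n + A n) = n` at `n = N`
and `n = N + p²` gives `p² = (p + c) c`, i.e. `p / c` is the golden ratio, which is irrational.
-/

/-- The Fibonacci substitution `a ↦ ab`, `b ↦ a`, with `a = true`, `b = false`. -/
def fibSub : Bool → List Bool := fun x => if x then [true, false] else [true]

/-- `w` is the fixed point of the Fibonacci substitution starting with `a`:
for every `n`, applying the substitution to the first `n` letters of `w`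
produces a prefix of `w`. -/
def IsFibWord (w : ℕ → Bool) : Prop :=
  w 0 = true ∧
    ∀ n k : ℕ, ∀ h : k < (((List.range n).map w).flatMap fibSub).length,
      (((List.range n).map w).flatMap fibSub).get ⟨k, h⟩ = w k

open Real goldenRatio

theorem eq_goldenRatio_of_sq_eq_add_one {x : ℝ} (hx : 0 < x) (h : x ^ 2 = x + 1) : x = φ := by
  have hroots : (x - φ) * (x - ψ) = 0 := by
    linear_combination h - Real.sq_sqrt (show (0 : ℝ) ≤ 5 by norm_num) / 4
  have hψ : x - ψ ≠ 0 := by linarith [goldenConj_neg]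
  exact sub_eq_zero.mp ((mul_eq_zero.mp hroots).resolve_right hψ)

theorem Nat.mul_self_ne_add_mul {p : ℕ} (hp : 0 < p) (c : ℕ) : p * p ≠ (p + c) * c := by
  intro h
  have hc : c ≠ 0 := by rintro rfl; simp at h; omega
  have hsq : ((p / c : ℚ) : ℝ) ^ 2 = (p / c : ℚ) + 1 := by
    push_cast
    field_simp
    norm_cast
    linarith
  refine goldenRatio_irrational ⟨p / c, eq_goldenRatio_of_sq_eq_add_one ?_ hsq⟩
  push_cast
  positivity

theorem length_flatMap_fibSub (l : List Bool) :
    (l.flatMap fibSub).length = l.length + l.count true := by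
  induction l with
  | nil => rfl
  | cons a l ih => cases a <;> simp [fibSub, ih] <;> omega

theorem count_flatMap_fibSub (l : List Bool) : (l.flatMap fibSub).count true = l.length := by
  induction l with
  | nil => rfl
  | cons a l ih => cases a <;> simp [fibSub, ih]

def prefixCount (w : ℕ → Bool) (n : ℕ) : ℕ := ((List.range n).map w).count true

section prefixCount

variable {w : ℕ → Bool}

theorem prefixCount_succ (w : ℕ → Bool) (n : ℕ) :
    prefixCount w (n + 1) = prefixCount w n + (w n).toNat := by
  cases h : w n <;> simp [prefixCount, List.range_succ, h]

theorem prefixCount_monotone (w : ℕ → Bool) : Monotone (prefixCount w) :=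
  monotone_nat_of_le_succ fun n => by rw [prefixCount_succ]; omega

theorem prefixCount_add_period {N p : ℕ} (hper : ∀ k ≥ N, w (k + p) = w k) {m : ℕ} (hm : N ≤ m) :
    prefixCount w (m + p) + prefixCount w N = prefixCount w m + prefixCount w (N + p) := by
  induction m, hm using Nat.le_induction with
  | base => exact add_comm _ _
  | succ m hm ih =>
    rw [Nat.add_right_comm, prefixCount_succ, prefixCount_succ, hper m hm]
    omega

theorem exists_prefixCount_add_mul_period {N p : ℕ} (hper : ∀ k ≥ N, w (k + p) = w k) :
    ∃ c, ∀ m ≥ N, ∀ k, prefixCount w (m + k * p) = prefixCount w m + k * c := by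
  refine ⟨prefixCount w (N + p) - prefixCount w N, fun m hm k => ?_⟩
  have hNp := prefixCount_monotone w (Nat.le_add_right N p)
  induction k with
  | zero => simp
  | succ k ih =>
    have := prefixCount_add_period hper (hm.trans (Nat.le_add_right m (k * p)))
    rw [Nat.succ_mul, Nat.succ_mul, ← Nat.add_assoc]
    omega

end prefixCount

namespace IsFibWord

variable {w : ℕ → Bool}

theorem flatMap_fibSub_prefix (hw : IsFibWord w) (n : ℕ) :
    ((List.range n).map w).flatMap fibSub = (List.range (n + prefixCount w n)).map w := by
  refine List.ext_get ?_ fun k hk _ => ?_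
  · rw [length_flatMap_fibSub]
    simp [prefixCount]
  · simpa using hw.2 n k hk

theorem prefixCount_add_prefixCount (hw : IsFibWord w) (n : ℕ) :
    prefixCount w (n + prefixCount w n) = n := by
  rw [prefixCount, ← hw.flatMap_fibSub_prefix, count_flatMap_fibSub, List.length_map,
    List.length_range]

end IsFibWord

theorem fibonacci_word_not_eventually_periodic (w : ℕ → Bool) (hw : IsFibWord w) :
    ¬ ∃ N p : ℕ, 0 < p ∧ ∀ k ≥ N, w (k + p) = w k := by
  rintro ⟨N, p, hp, hper⟩
  obtain ⟨c, hc⟩ := exists_prefixCount_add_mul_period hper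
  set A := prefixCount w
  have hN : A (N + A N) = N := hw.prefixCount_add_prefixCount N
  have hM : A (N + p * p + A (N + p * p)) = N + p * p := hw.prefixCount_add_prefixCount _
  have hAM : A (N + p * p) = A N + p * c := hc N le_rfl p
  have hshift : N + p * p + A (N + p * p) = N + A N + (p + c) * p := by rw [hAM]; ring
  rw [hshift, hc _ (Nat.le_add_right N (A N)), hN] at hM
  exact Nat.mul_self_ne_add_mul hp c (by omega)
end
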